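/- For any admissible index (k_1, …, k_r), the infinite multiple zeta-star value ζ*(k_1, …, k_r, {2}^∞) equals Σ_{n_1 ≥ ⋯ ≥ n_r ≥ 1} (1/(n_1^{k_1} ⋯ n_r^{k_r})) · (2 n_r/(n_r + 1)). -/

import Mathlib

open scoped BigOperators

/-- The set of weakly decreasing tuples of positive integers of length `r`. -/
def DecTuple (r : ℕ) : Set (Fin r → ℕ) :=
  {f | (∀ i, 1 ≤ f i) ∧ ∀ i j : Fin r, i ≤ j → f j ≤ f i}

/-- The multiple zeta-star value of an index `k`. -/
noncomputable def zetaStar {r : ℕ} (k : Fin r → ℕ) : ℝ :=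
  ∑' f : DecTuple r, ∏ i, (((f : Fin r → ℕ) i : ℝ) ^ (k i))⁻¹

/-!
Put a weight `w` on the last variable,
`Z_K(w) = ∑_{n_1 ≥ ⋯ ≥ n_r ≥ 1} w(n_r) / (n_1^{K_1} ⋯ n_r^{K_r})` (`zetaStarWeighted`).
Summing out the last variable of an index ending in `2` gives `Z_{(K,2)}(w) = Z_K(Φ w)` with
`(Φ w)(n) = ∑_{t=1}^n w(t) / t²` (`invSqSum`), so `ζ*(k, {2}^s) = Z_k(Φ^s 1)`.
The function `g(n) = 2n/(n+1)` is a fixed point of `Φ`, because `2 / (t (t+1)) = 2/t - 2/(t+1)`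
telescopes; `Φ^s 1` and `g` agree at `n = 1`, and on differences vanishing at `1` the operator `Φ`
contracts by `∑_{t ≥ 2} 1/t² ≤ 11/12`. So `Φ^s 1 → g` uniformly, and dominated convergence gives
the limit `Z_k(g)`: the series `ζ*(k)` of an admissible index converges since
`n_1^{k_1} ⋯ n_r^{k_r} ≥ n_1 ∏ n_i ≥ ∏ n_i^{1 + 1/r}`.
-/

open Finset Filter Topology
open scoped ENNReal

noncomputable def invSqSum (w : ℕ → ℝ) (n : ℕ) : ℝ :=
  ∑ t ∈ Icc 1 n, ((t : ℝ) ^ 2)⁻¹ * w t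

lemma invSqSum_nonneg {w : ℕ → ℝ} (hw : ∀ n, 0 ≤ w n) (n : ℕ) : 0 ≤ invSqSum w n :=
  sum_nonneg fun t _ => mul_nonneg (by positivity) (hw t)

lemma invSqSum_iterate_nonneg {w : ℕ → ℝ} (hw : ∀ n, 0 ≤ w n) (s n : ℕ) :
    0 ≤ invSqSum^[s] w n := by
  induction s generalizing n with
  | zero => exact hw n
  | succ s ih => rw [Function.iterate_succ_apply']; exact invSqSum_nonneg ih n

lemma invSqSum_apply_one (w : ℕ → ℝ) : invSqSum w 1 = w 1 := by
  simp [invSqSum]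

lemma invSqSum_two_mul_div (n : ℕ) :
    invSqSum (fun t => 2 * t / (t + 1)) n = 2 * n / (n + 1) := by
  induction n with
  | zero => simp [invSqSum]
  | succ n ih =>
    rw [invSqSum, sum_Icc_succ_top (by omega), ← invSqSum, ih]
    push_cast
    field_simp
    ring

lemma sum_Icc_two_inv_sq_le (n : ℕ) : ∑ t ∈ Icc 2 n, ((t : ℝ) ^ 2)⁻¹ ≤ 11 / 12 := by
  have hsub : Icc 2 n ⊆ insert 2 (Ioo 2 (n + 1)) := fun t ht => by
    simp only [mem_Icc, mem_insert, mem_Ioo] at ht ⊢; omega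
  calc ∑ t ∈ Icc 2 n, ((t : ℝ) ^ 2)⁻¹ ≤ ∑ t ∈ insert 2 (Ioo 2 (n + 1)), ((t : ℝ) ^ 2)⁻¹ :=
        sum_le_sum_of_subset_of_nonneg hsub fun _ _ _ => by positivity
    _ ≤ ((2 : ℕ) ^ 2 : ℝ)⁻¹ + 2 / ((2 : ℕ) + 1) := by
        rw [sum_insert (by simp)]
        exact add_le_add_right (sum_Ioo_inv_sq_le (α := ℝ) 2 (n + 1)) _
    _ = 11 / 12 := by norm_num

lemma abs_invSqSum_sub_le {w v : ℕ → ℝ} {ε : ℝ} (h1 : w 1 = v 1)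
    (hε : ∀ t, 1 ≤ t → |w t - v t| ≤ ε) (n : ℕ) :
    |invSqSum w n - invSqSum v n| ≤ 11 / 12 * ε := by
  have hε0 : 0 ≤ ε := (abs_nonneg _).trans (hε 1 le_rfl)
  have hIcc : Icc 1 n ⊆ insert 1 (Icc 2 n) := fun t ht => by
    simp only [mem_Icc, mem_insert] at ht ⊢; omega
  calc |invSqSum w n - invSqSum v n|
      = |∑ t ∈ Icc 1 n, ((t : ℝ) ^ 2)⁻¹ * (w t - v t)| := by
        simp only [invSqSum, ← sum_sub_distrib, mul_sub]
    _ ≤ ∑ t ∈ Icc 1 n, ((t : ℝ) ^ 2)⁻¹ * |w t - v t| := by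
        refine (abs_sum_le_sum_abs _ _).trans (sum_le_sum fun t _ => ?_)
        rw [abs_mul, abs_of_nonneg (by positivity)]
    _ ≤ ∑ t ∈ insert 1 (Icc 2 n), ((t : ℝ) ^ 2)⁻¹ * |w t - v t| :=
        sum_le_sum_of_subset_of_nonneg hIcc fun _ _ _ => by positivity
    _ = ∑ t ∈ Icc 2 n, ((t : ℝ) ^ 2)⁻¹ * |w t - v t| := by
        rw [sum_insert (by simp), h1, sub_self, abs_zero, mul_zero, zero_add]
    _ ≤ ∑ t ∈ Icc 2 n, ((t : ℝ) ^ 2)⁻¹ * ε :=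
        sum_le_sum fun t ht => mul_le_mul_of_nonneg_left
          (hε t (by simp only [mem_Icc] at ht; omega)) (by positivity)
    _ ≤ 11 / 12 * ε := by
        rw [← sum_mul]; exact mul_le_mul_of_nonneg_right (sum_Icc_two_inv_sq_le n) hε0

lemma invSqSum_iterate_apply_one (w : ℕ → ℝ) (s : ℕ) : invSqSum^[s] w 1 = w 1 := by
  induction s with
  | zero => rfl
  | succ s ih => rw [Function.iterate_succ_apply', invSqSum_apply_one, ih]

lemma abs_invSqSum_iterate_sub_le (s : ℕ) {n : ℕ} (hn : 1 ≤ n) :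
    |invSqSum^[s] 1 n - 2 * n / (n + 1)| ≤ (11 / 12) ^ s := by
  induction s generalizing n with
  | zero =>
    have hn' : (1 : ℝ) ≤ n := by exact_mod_cast hn
    have hg : 2 * (n : ℝ) / (n + 1) = 2 - 2 / (n + 1) := by field_simp; ring
    have hq : 2 / ((n : ℝ) + 1) ≤ 1 := by rw [div_le_one (by positivity)]; linarith
    have hq' : 0 < 2 / ((n : ℝ) + 1) := by positivity
    rw [Function.iterate_zero, id_eq, Pi.one_apply, pow_zero, hg, abs_le]
    constructor <;> linarith
  | succ s ih =>
    rw [Function.iterate_succ_apply', ← invSqSum_two_mul_div n, pow_succ, mul_comm]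
    refine abs_invSqSum_sub_le ?_ (fun t ht => ih ht) n
    rw [invSqSum_iterate_apply_one]
    norm_num

lemma tendsto_invSqSum_iterate {n : ℕ} (hn : 1 ≤ n) :
    Tendsto (fun s => invSqSum^[s] 1 n) atTop (𝓝 (2 * n / (n + 1))) := by
  rw [tendsto_iff_norm_sub_tendsto_zero]
  exact squeeze_zero (fun _ => norm_nonneg _) (fun s => abs_invSqSum_iterate_sub_le s hn)
    (tendsto_pow_atTop_nhds_zero_of_lt_one (by norm_num) (by norm_num))

lemma invSqSum_iterate_le_three (s : ℕ) {n : ℕ} (hn : 1 ≤ n) : invSqSum^[s] 1 n ≤ 3 := by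
  have hg : 2 * (n : ℝ) / (n + 1) ≤ 2 := by
    rw [div_le_iff₀ (by positivity)]; linarith
  have h := (le_abs_self _).trans (abs_invSqSum_iterate_sub_le s hn)
  have hpow : (11 / 12 : ℝ) ^ s ≤ 1 := pow_le_one₀ (by norm_num) (by norm_num)
  linarith

lemma summable_fintype_prod {ι β : Type*} [Fintype ι] {u : β → ℝ}
    (hu0 : ∀ b, 0 ≤ u b) (hu : Summable u) : Summable fun x : ι → β => ∏ i, u (x i) := by
  classical
  refine summable_of_sum_le (c := ∏ _i : ι, ∑' b, u b) (fun x => prod_nonneg fun i _ => hu0 _)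
    fun s => ?_
  calc ∑ x ∈ s, ∏ i, u (x i)
      ≤ ∑ x ∈ Fintype.piFinset fun i => s.image (· i), ∏ i, u (x i) :=
        sum_le_sum_of_subset_of_nonneg
          (fun x hx => Fintype.mem_piFinset.2 fun i => mem_image_of_mem _ hx)
          fun _ _ _ => prod_nonneg fun i _ => hu0 _
    _ = ∏ i, ∑ b ∈ s.image (· i), u b := (prod_univ_sum _ _).symm
    _ ≤ ∏ _i : ι, ∑' b, u b :=
        Finset.prod_le_prod (fun i _ => sum_nonneg fun b _ => hu0 b)
          fun i _ => hu.sum_le_tsum _ fun b _ => hu0 b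

lemma mul_prod_le_prod_pow {r : ℕ} (hr : 0 < r) {f k : Fin r → ℕ} (hf : ∀ i, 1 ≤ f i)
    (hadm : 2 ≤ k ⟨0, hr⟩) (hpos : ∀ i, 1 ≤ k i) :
    f ⟨0, hr⟩ * ∏ i, f i ≤ ∏ i, f i ^ k i := by
  have hsplit : ∏ i, f i ^ k i = (∏ i, f i) * ∏ i, f i ^ (k i - 1) := by
    rw [← prod_mul_distrib]
    exact prod_congr rfl fun i _ => by rw [← pow_succ', Nat.sub_add_cancel (hpos i)]
  rw [hsplit, mul_comm]
  refine Nat.mul_le_mul_left _ ?_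
  calc f ⟨0, hr⟩ ≤ f ⟨0, hr⟩ ^ (k ⟨0, hr⟩ - 1) := Nat.le_self_pow (by omega) _
    _ ≤ ∏ i, f i ^ (k i - 1) :=
        single_le_prod' (f := fun i => f i ^ (k i - 1)) (fun i _ => Nat.one_le_pow _ _ (hf i))
          (mem_univ _)

lemma prod_inv_pow_le_prod_inv_rpow {r : ℕ} (hr : 0 < r) {k : Fin r → ℕ}
    (hadm : 2 ≤ k ⟨0, hr⟩) (hpos : ∀ i, 1 ≤ k i) {f : Fin r → ℕ} (hf : f ∈ DecTuple r) :
    ∏ i, ((f i : ℝ) ^ k i)⁻¹ ≤ ∏ i, ((f i : ℝ) ^ (1 + (r : ℝ)⁻¹))⁻¹ := by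
  have hf0 : ∀ i, (0 : ℝ) < f i := fun i => by exact_mod_cast hf.1 i
  have hroot : ∏ i, (f i : ℝ) ^ (r : ℝ)⁻¹ ≤ f ⟨0, hr⟩ :=
    calc ∏ i, (f i : ℝ) ^ (r : ℝ)⁻¹ ≤ ∏ _i : Fin r, (f ⟨0, hr⟩ : ℝ) ^ (r : ℝ)⁻¹ :=
          Finset.prod_le_prod (fun i _ => by positivity) fun i _ =>
            Real.rpow_le_rpow (hf0 i).le
              (by exact_mod_cast hf.2 _ i (Fin.le_iff_val_le_val.2 (Nat.zero_le _))) (by positivity)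
      _ = f ⟨0, hr⟩ := by
          rw [prod_const, card_univ, Fintype.card_fin,
            Real.rpow_inv_natCast_pow (hf0 _).le hr.ne']
  have key : ∏ i, (f i : ℝ) ^ (1 + (r : ℝ)⁻¹) ≤ ∏ i, (f i : ℝ) ^ k i :=
    calc ∏ i, (f i : ℝ) ^ (1 + (r : ℝ)⁻¹) = (∏ i, (f i : ℝ)) * ∏ i, (f i : ℝ) ^ (r : ℝ)⁻¹ := by
          rw [← prod_mul_distrib]
          exact prod_congr rfl fun i _ => by rw [Real.rpow_add (hf0 i), Real.rpow_one]
      _ ≤ (∏ i, (f i : ℝ)) * f ⟨0, hr⟩ :=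
          mul_le_mul_of_nonneg_left hroot (prod_nonneg fun i _ => (hf0 i).le)
      _ ≤ ∏ i, (f i : ℝ) ^ k i := by
          rw [mul_comm]; exact_mod_cast mul_prod_le_prod_pow hr hf.1 hadm hpos
  rw [prod_inv_distrib, prod_inv_distrib]
  exact inv_anti₀ (prod_pos fun i _ => Real.rpow_pos_of_pos (hf0 i) _) key

lemma summable_zetaStar {r : ℕ} (hr : 0 < r) {k : Fin r → ℕ} (hadm : 2 ≤ k ⟨0, hr⟩)
    (hpos : ∀ i, 1 ≤ k i) :
    Summable fun f : DecTuple r => ∏ i, ((f.1 i : ℝ) ^ k i)⁻¹ := by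
  have hp : 1 < 1 + (r : ℝ)⁻¹ := lt_add_of_pos_right _ (by positivity)
  have hdom := (summable_fintype_prod (ι := Fin r) (fun n : ℕ => by positivity)
    (Real.summable_nat_rpow_inv.2 hp)).subtype (DecTuple r)
  exact hdom.of_nonneg_of_le (fun f => prod_nonneg fun i _ => by positivity)
    fun f => prod_inv_pow_le_prod_inv_rpow hr hadm hpos f.2

lemma snoc_mem_decTuple_iff {m : ℕ} (hm : 0 < m) {f : Fin m → ℕ} {t : ℕ} :
    (Fin.snoc f t : Fin (m + 1) → ℕ) ∈ DecTuple (m + 1) ↔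
      f ∈ DecTuple m ∧ t ∈ Icc 1 (f ⟨m - 1, by omega⟩) := by
  have hlast : ∀ i : Fin m, i ≤ ⟨m - 1, by omega⟩ := fun i =>
    Fin.le_iff_val_le_val.2 (Nat.le_sub_one_of_lt i.2)
  constructor
  · rintro ⟨hpos, hanti⟩
    refine ⟨⟨fun i => by simpa using hpos i.castSucc, fun i j hij => ?_⟩, mem_Icc.2 ⟨?_, ?_⟩⟩
    · simpa using hanti i.castSucc j.castSucc (Fin.castSucc_le_castSucc_iff.2 hij)
    · simpa using hpos (Fin.last m)
    · simpa using hanti (Fin.castSucc ⟨m - 1, by omega⟩) (Fin.last m) (Fin.le_last _)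
  · rintro ⟨⟨hpos, hanti⟩, ht⟩
    rw [mem_Icc] at ht
    refine ⟨Fin.lastCases (by simpa using ht.1) fun i => by simpa using hpos i, fun i j hij => ?_⟩
    induction j using Fin.lastCases with
    | last =>
      induction i using Fin.lastCases with
      | last => exact le_rfl
      | cast i => simpa using ht.2.trans (hanti i _ (hlast i))
    | cast j =>
      induction i using Fin.lastCases with
      | last => exact absurd hij (not_le.2 (Fin.castSucc_lt_last j))
      | cast i => simpa using hanti i j (Fin.castSucc_le_castSucc_iff.1 hij)

noncomputable def decTupleSuccEquiv {m : ℕ} (hm : 0 < m) :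
    DecTuple (m + 1) ≃ {p : DecTuple m × ℕ // p.2 ∈ Icc 1 (p.1.1 ⟨m - 1, by omega⟩)} where
  toFun g :=
    have h := (snoc_mem_decTuple_iff hm).1 (by rw [Fin.snoc_init_self]; exact g.2)
    ⟨(⟨Fin.init g.1, h.1⟩, g.1 (Fin.last m)), h.2⟩
  invFun p := ⟨Fin.snoc p.1.1.1 p.1.2, (snoc_mem_decTuple_iff hm).2 ⟨p.1.1.2, p.2⟩⟩
  left_inv g := Subtype.ext (Fin.snoc_init_self g.1)
  right_inv p := Subtype.ext <| Prod.ext (Subtype.ext (Fin.init_snoc (α := fun _ => ℕ) _ _))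
    (Fin.snoc_last (α := fun _ => ℕ) _ _)

noncomputable def zetaStarWeighted {r : ℕ} (hr : 0 < r) (K : Fin r → ℕ) (w : ℕ → ℝ≥0∞) : ℝ≥0∞ :=
  ∑' f : DecTuple r, (∏ i, ((f.1 i : ℝ≥0∞) ^ K i)⁻¹) * w (f.1 ⟨r - 1, by omega⟩)

lemma zetaStarWeighted_succ {m : ℕ} (hm : 0 < m) (K : Fin (m + 1) → ℕ) (w : ℕ → ℝ≥0∞) :
    zetaStarWeighted m.succ_pos K w = zetaStarWeighted hm (Fin.init K)
      fun n => ∑ t ∈ Icc 1 n, ((t : ℝ≥0∞) ^ K (Fin.last m))⁻¹ * w t := by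
  rw [zetaStarWeighted, ← (decTupleSuccEquiv hm).symm.tsum_eq,
    ← (Equiv.subtypeProdEquivSigmaSubtype fun (f : DecTuple m) (t : ℕ) =>
      t ∈ Icc 1 (f.1 ⟨m - 1, by omega⟩)).symm.tsum_eq, ENNReal.tsum_sigma', zetaStarWeighted]
  refine tsum_congr fun f => ?_
  rw [← Finset.tsum_subtype, ← ENNReal.tsum_mul_left]
  refine tsum_congr fun t => ?_
  have hlast : ∀ h, (⟨m.succ - 1, h⟩ : Fin (m + 1)) = Fin.last m := fun _ => rfl
  simp only [decTupleSuccEquiv, Equiv.subtypeProdEquivSigmaSubtype, Equiv.coe_fn_symm_mk,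
    Fin.prod_univ_castSucc, Fin.snoc_castSucc, hlast, Fin.snoc_last, Fin.init, mul_assoc]

def appendTwos {r : ℕ} (k : Fin r → ℕ) (s : ℕ) : Fin (r + s) → ℕ :=
  fun i => if h : (i : ℕ) < r then k ⟨i, h⟩ else 2

lemma init_appendTwos {r : ℕ} (k : Fin r → ℕ) (s : ℕ) :
    Fin.init (appendTwos k (s + 1)) = appendTwos k s := by
  funext i
  simp [Fin.init, appendTwos]

lemma appendTwos_last {r : ℕ} (k : Fin r → ℕ) (s : ℕ) :
    appendTwos k (s + 1) (Fin.last (r + s)) = 2 :=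
  dif_neg (by simp)

lemma appendTwos_zero {r : ℕ} (k : Fin r → ℕ) : appendTwos k 0 = k := by
  funext i
  simp [appendTwos]

lemma ofReal_invSqSum {w : ℕ → ℝ} (hw : ∀ n, 0 ≤ w n) (n : ℕ) :
    ENNReal.ofReal (invSqSum w n) = ∑ t ∈ Icc 1 n, ((t : ℝ≥0∞) ^ 2)⁻¹ * ENNReal.ofReal (w t) := by
  rw [invSqSum, ENNReal.ofReal_sum_of_nonneg fun t _ => mul_nonneg (by positivity) (hw t)]
  refine sum_congr rfl fun t ht => ?_
  have ht0 : (0 : ℝ) < t := by have := (mem_Icc.1 ht).1; positivity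
  rw [ENNReal.ofReal_mul (by positivity), ENNReal.ofReal_inv_of_pos (by positivity),
    ENNReal.ofReal_pow ht0.le, ENNReal.ofReal_natCast]

lemma zetaStarWeighted_appendTwos {r : ℕ} (hr : 0 < r) (k : Fin r → ℕ) (s : ℕ) {w : ℕ → ℝ}
    (hw : ∀ n, 0 ≤ w n) :
    zetaStarWeighted (Nat.add_pos_left hr s) (appendTwos k s) (fun n => ENNReal.ofReal (w n)) =
      zetaStarWeighted hr k fun n => ENNReal.ofReal (invSqSum^[s] w n) := by
  induction s generalizing w with
  | zero => rw [appendTwos_zero]; rfl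
  | succ s ih =>
    rw [zetaStarWeighted_succ (Nat.add_pos_left hr s), init_appendTwos, appendTwos_last,
      Function.iterate_succ_apply]
    simp only [← ofReal_invSqSum hw]
    exact ih (invSqSum_nonneg hw)

lemma toReal_zetaStarWeighted_ofReal {r : ℕ} (hr : 0 < r) (K : Fin r → ℕ) {w : ℕ → ℝ}
    (hw : ∀ n, 0 ≤ w n) :
    (zetaStarWeighted hr K fun n => ENNReal.ofReal (w n)).toReal =
      ∑' f : DecTuple r, (∏ i, ((f.1 i : ℝ) ^ K i)⁻¹) * w (f.1 ⟨r - 1, by omega⟩) := by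
  have hterm : ∀ f : DecTuple r, (∏ i, ((f.1 i : ℝ≥0∞) ^ K i)⁻¹) =
      ENNReal.ofReal (∏ i, ((f.1 i : ℝ) ^ K i)⁻¹) := fun f => by
    rw [ENNReal.ofReal_prod_of_nonneg fun i _ => by positivity]
    refine prod_congr rfl fun i _ => ?_
    have hfi : (0 : ℝ) < f.1 i := by exact_mod_cast f.2.1 i
    rw [ENNReal.ofReal_inv_of_pos (by positivity), ENNReal.ofReal_pow hfi.le,
      ENNReal.ofReal_natCast]
  rw [zetaStarWeighted, ENNReal.tsum_toReal_eq fun f => by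
    rw [hterm]; exact ENNReal.mul_ne_top ENNReal.ofReal_ne_top ENNReal.ofReal_ne_top]
  refine tsum_congr fun f => ?_
  rw [hterm, ← ENNReal.ofReal_mul (prod_nonneg fun i _ => by positivity),
    ENNReal.toReal_ofReal (mul_nonneg (prod_nonneg fun i _ => by positivity) (hw _))]

lemma zetaStar_appendTwos {r : ℕ} (hr : 0 < r) (k : Fin r → ℕ) (s : ℕ) :
    zetaStar (appendTwos k s) =
      ∑' f : DecTuple r, (∏ i, ((f.1 i : ℝ) ^ k i)⁻¹) * invSqSum^[s] 1 (f.1 ⟨r - 1, by omega⟩) := by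
  have h1 : ∀ n, (0 : ℝ) ≤ (1 : ℕ → ℝ) n := fun _ => zero_le_one
  calc zetaStar (appendTwos k s)
      = (zetaStarWeighted (Nat.add_pos_left hr s) (appendTwos k s)
          fun n => ENNReal.ofReal ((1 : ℕ → ℝ) n)).toReal := by
        rw [toReal_zetaStarWeighted_ofReal _ _ h1]
        simp only [Pi.one_apply, mul_one, zetaStar]
    _ = (zetaStarWeighted hr k fun n => ENNReal.ofReal (invSqSum^[s] 1 n)).toReal := by
        rw [zetaStarWeighted_appendTwos hr k s h1]
    _ = _ := toReal_zetaStarWeighted_ofReal hr k (invSqSum_iterate_nonneg h1 s)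

/-- ζ*(k_1,…,k_r,{2}^∞)
= Σ_{n_1 ≥ ⋯ ≥ n_r ≥ 1} (1/(n_1^{k_1}⋯n_r^{k_r})) · (2n_r/(n_r+1)). -/
theorem stmt13 (r : ℕ) (hr : 1 ≤ r) (k : Fin r → ℕ)
    (hadm : 2 ≤ k ⟨0, by omega⟩) (hpos : ∀ i, 1 ≤ k i) :
    Filter.Tendsto
      (fun s : ℕ => zetaStar (fun i : Fin (r + s) =>
        if h : (i : ℕ) < r then k ⟨i, h⟩ else 2))
      Filter.atTop
      (nhds (∑' f : DecTuple r,
        (∏ i, (((f : Fin r → ℕ) i : ℝ) ^ (k i))⁻¹) *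
          (2 * ((f : Fin r → ℕ) ⟨r - 1, by omega⟩ : ℝ) /
            (((f : Fin r → ℕ) ⟨r - 1, by omega⟩ : ℝ) + 1)))) := by
  change Tendsto (fun s => zetaStar (appendTwos k s)) atTop _
  simp only [zetaStar_appendTwos hr k]
  refine tendsto_tsum_of_dominated_convergence ((summable_zetaStar hr hadm hpos).mul_right 3)
    (fun f => tendsto_const_nhds.mul (tendsto_invSqSum_iterate (f.2.1 _)))
    (Eventually.of_forall fun s f => ?_)
  have ha : 0 ≤ ∏ i, ((f.1 i : ℝ) ^ k i)⁻¹ := prod_nonneg fun i _ => by positivity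
  rw [norm_mul, Real.norm_of_nonneg ha,
    Real.norm_of_nonneg (invSqSum_iterate_nonneg (w := 1) (fun _ => zero_le_one) s _)]
  exact mul_le_mul_of_nonneg_left (invSqSum_iterate_le_three s (f.2.1 _)) ha
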